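/- Let d ≥ 1 be an integer, σ ≥ 0, L ≥ 0, Δ ≥ 0, γ₀ > 0. Define η_t = (2/(t+2))^{2/3} and γ_t = γ₀·2/(t+2) for integers t ≥ 0. On a probability space, let (ê_t)_{t≥0}, (e_t)_{t≥1}, (S_t)_{t≥1} be square-integrable ℝ^d-valued random sequences such that: (i) ê_t = (1 − η_t)·ê_{t−1} + η_t·e_t + (1 − η_t)·S_t for all t ≥ 1; (ii) E[⟨e_s, e_t⟩] = 0 for all integers 1 ≤ s < t; (iii) E[‖e_t‖²] ≤ σ² for all t ≥ 1; (iv) E[‖ê_0‖] ≤ σ; (v) ‖S_t‖ ≤ L·γ_{t−1} + Δ almost surely for all t ≥ 1. Then there exist absolute constants C₁, C₂, C₃ > 0 (independent of all the above data) such that for every integer T ≥ 1: E[‖ê_T‖] ≤ C₁·σ·η_T^{1/2} + C₂·L·γ_T·η_T^{−1} + C₃·Δ·η_T^{−1}. -/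

import Mathlib

/-!
Unrolling the recursion, `ê_T = p_T ê_0 + Z_T + Y_T` where `p_T = ∏_{1 ≤ t ≤ T} (1 - η_t)`,
`Z_T` is the momentum average of the noises `η_t e_t` and `Y_T` that of the drifts
`(1 - η_t) S_t`. Since the noises are orthogonal in `L²`, `v_t = E‖Z_t‖²` obeys
`v_{t+1} ≤ (1 - η_{t+1})² v_t + η_{t+1}² σ²`, which keeps `v_t ≤ σ² η_t`; similarly `p_t ≤ √η_t`,
and `‖Y_t‖ ≤ (4 L γ_t + 2 Δ) / η_t` almost surely. With `r_t = (2/(t+2))^{1/3}` one has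
`η_t = r_t²`, `γ_t = γ₀ r_t³` and `r_{t+1}⁻³ - r_t⁻³ = 1/2`, so each of these inductive steps is a
polynomial inequality in `r_t` and `r_{t+1}`.
-/

open MeasureTheory
open scoped RealInnerProductSpace

/-- The momentum parameter sequence `η_t = (2/(t+2))^{2/3}` of the N-MPG analysis. -/
noncomputable def etaNMPG (t : ℕ) : ℝ := (2 / ((t : ℝ) + 2)) ^ ((2 : ℝ) / 3)

/-- The step-size sequence `γ_t = γ₀ · 2/(t+2)` of the N-MPG analysis. -/
noncomputable def gammaNMPG (γ₀ : ℝ) (t : ℕ) : ℝ := γ₀ * (2 / ((t : ℝ) + 2))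

section Momentum

variable (η : ℕ → ℝ)

def momentum {E : Type*} [AddCommGroup E] [Module ℝ E] (x₀ : E) (u : ℕ → E) : ℕ → E
  | 0 => x₀
  | t + 1 => (1 - η (t + 1)) • momentum x₀ u t + u (t + 1)

section Linear

variable {E : Type*} [AddCommGroup E] [Module ℝ E]

@[simp] lemma momentum_zero (x₀ : E) (u : ℕ → E) : momentum η x₀ u 0 = x₀ := rfl

lemma momentum_succ (x₀ : E) (u : ℕ → E) (t : ℕ) :
    momentum η x₀ u (t + 1) = (1 - η (t + 1)) • momentum η x₀ u t + u (t + 1) := rfl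

lemma momentum_add (x₀ y₀ : E) (u v : ℕ → E) (t : ℕ) :
    momentum η (x₀ + y₀) (u + v) t = momentum η x₀ u t + momentum η y₀ v t := by
  induction t with
  | zero => rfl
  | succ t ih => simp only [momentum_succ, ih, Pi.add_apply]; module

lemma eq_momentum {x u : ℕ → E} (hx : ∀ t, x (t + 1) = (1 - η (t + 1)) • x t + u (t + 1))
    (t : ℕ) : x t = momentum η (x 0) u t := by
  induction t with
  | zero => rfl
  | succ t ih => rw [hx, ih, momentum_succ]

end Linear

lemma norm_momentum_le {E : Type*} [SeminormedAddCommGroup E] [NormedSpace ℝ E]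
    (hη : ∀ t, η (t + 1) ≤ 1) {x₀ : E} {u : ℕ → E} {b c : ℕ → ℝ} (h₀ : ‖x₀‖ ≤ b 0)
    (hu : ∀ t, ‖u (t + 1)‖ ≤ c t) (hb : ∀ t, (1 - η (t + 1)) * b t + c t ≤ b (t + 1)) (t : ℕ) :
    ‖momentum η x₀ u t‖ ≤ b t := by
  induction t with
  | zero => exact h₀
  | succ t ih =>
    have hη' : 0 ≤ 1 - η (t + 1) := sub_nonneg.2 (hη t)
    calc ‖momentum η x₀ u (t + 1)‖
        ≤ (1 - η (t + 1)) * ‖momentum η x₀ u t‖ + ‖u (t + 1)‖ := by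
          rw [momentum_succ]
          refine (norm_add_le _ _).trans_eq ?_
          rw [norm_smul, Real.norm_of_nonneg hη']
      _ ≤ (1 - η (t + 1)) * b t + c t := by gcongr; exact hu t
      _ ≤ b (t + 1) := hb t

section Orthogonal

variable {H : Type*} [NormedAddCommGroup H] [InnerProductSpace ℝ H] {x : ℕ → H}

lemma inner_momentum_eq_zero (horth : ∀ s t, 1 ≤ s → s < t → ⟪x s, x t⟫ = 0) {t u : ℕ}
    (htu : t < u) : ⟪momentum η 0 (η • x) t, x u⟫ = 0 := by
  induction t with
  | zero => simp
  | succ t ih =>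
    rw [momentum_succ, inner_add_left, real_inner_smul_left, ih (by omega), Pi.smul_apply',
      real_inner_smul_left, horth _ _ (by omega) htu]
    ring

lemma norm_momentum_sq_le (hη₀ : 0 ≤ η 0)
    (hη : ∀ t, (1 - η (t + 1)) ^ 2 * η t + η (t + 1) ^ 2 ≤ η (t + 1))
    (horth : ∀ s t, 1 ≤ s → s < t → ⟪x s, x t⟫ = 0) {σ : ℝ} (hx : ∀ t, 1 ≤ t → ‖x t‖ ^ 2 ≤ σ ^ 2)
    (t : ℕ) : ‖momentum η 0 (η • x) t‖ ^ 2 ≤ σ ^ 2 * η t := by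
  induction t with
  | zero => simpa using mul_nonneg (sq_nonneg σ) hη₀
  | succ t ih =>
    have hcross := inner_momentum_eq_zero η horth (Nat.lt_succ_self t)
    calc ‖momentum η 0 (η • x) (t + 1)‖ ^ 2
        = (1 - η (t + 1)) ^ 2 * ‖momentum η 0 (η • x) t‖ ^ 2 + η (t + 1) ^ 2 * ‖x (t + 1)‖ ^ 2 := by
          rw [momentum_succ, norm_add_sq_real, Pi.smul_apply', real_inner_smul_left,
            real_inner_smul_right, hcross, norm_smul, norm_smul, mul_pow, mul_pow,
            Real.norm_eq_abs, Real.norm_eq_abs, sq_abs, sq_abs]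
          ring
      _ ≤ (1 - η (t + 1)) ^ 2 * (σ ^ 2 * η t) + η (t + 1) ^ 2 * σ ^ 2 := by
          have hxt := hx (t + 1) (by omega)
          gcongr
      _ ≤ σ ^ 2 * η (t + 1) := by nlinarith [hη t, sq_nonneg σ]

end Orthogonal

section L2

variable {Ω F : Type*} [MeasurableSpace Ω] {P : Measure Ω} [NormedAddCommGroup F]
  [InnerProductSpace ℝ F]

lemma MeasureTheory.MemLp.inner_toLp_toLp {f g : Ω → F} (hf : MemLp f 2 P) (hg : MemLp g 2 P) :
    ⟪hf.toLp f, hg.toLp g⟫ = ∫ ω, ⟪f ω, g ω⟫ ∂P := by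
  rw [L2.inner_def]
  refine integral_congr_ae ?_
  filter_upwards [hf.coeFn_toLp, hg.coeFn_toLp] with ω hfω hgω
  rw [hfω, hgω]

lemma MeasureTheory.MemLp.norm_toLp_sq {f : Ω → F} (hf : MemLp f 2 P) :
    ‖hf.toLp f‖ ^ 2 = ∫ ω, ‖f ω‖ ^ 2 ∂P := by
  simp_rw [← real_inner_self_eq_norm_sq, hf.inner_toLp_toLp]

lemma MeasureTheory.L2.integral_norm_le_norm [IsProbabilityMeasure P] (g : Lp F 2 P) :
    ∫ ω, ‖g ω‖ ∂P ≤ ‖g‖ := by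
  have hg := Lp.memLp g
  have hvar := ProbabilityTheory.variance_eq_sub hg.norm
  have hnorm := hg.norm_toLp_sq
  rw [Lp.toLp_coeFn] at hnorm
  refine le_of_sq_le_sq ?_ (norm_nonneg g)
  have := ProbabilityTheory.variance_nonneg (fun ω => ‖g ω‖) P
  simp only [Pi.pow_apply] at hvar
  linarith

lemma coeFn_momentum {p : ENNReal} {x : ℕ → Lp F p P} {e : ℕ → Ω → F}
    (hx : ∀ s, x s =ᵐ[P] e s) (t : ℕ) :
    ⇑(momentum η 0 (η • x) t) =ᵐ[P] fun ω => momentum η 0 (η • fun s => e s ω) t := by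
  induction t with
  | zero => exact Lp.coeFn_zero F p P
  | succ t ih =>
    filter_upwards [Lp.coeFn_add ((1 - η (t + 1)) • momentum η 0 (η • x) t) (η (t + 1) • x (t + 1)),
      Lp.coeFn_smul (1 - η (t + 1)) (momentum η 0 (η • x) t), Lp.coeFn_smul (η (t + 1)) (x (t + 1)),
      hx (t + 1), ih] with ω hadd hsmul₁ hsmul₂ hxω ihω
    simp only [momentum_succ, Pi.smul_apply', hadd, Pi.add_apply, hsmul₁, hsmul₂, Pi.smul_apply,
      hxω, ihω]

lemma memLp_momentum {p : ENNReal} {x₀ : Ω → F} {u : ℕ → Ω → F} (hx₀ : MemLp x₀ p P)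
    (hu : ∀ s, MemLp (u s) p P) (t : ℕ) :
    MemLp (fun ω => momentum η (x₀ ω) (fun s => u s ω) t) p P := by
  induction t with
  | zero => exact hx₀
  | succ t ih => exact (ih.const_smul _).add (hu (t + 1))

theorem integral_norm_momentum_le [IsProbabilityMeasure P] {e : ℕ → Ω → F}
    (he : ∀ t, MemLp (e t) 2 P) (hη₀ : 0 ≤ η 0)
    (hη : ∀ t, (1 - η (t + 1)) ^ 2 * η t + η (t + 1) ^ 2 ≤ η (t + 1))
    (horth : ∀ s t, 1 ≤ s → s < t → ∫ ω, ⟪e s ω, e t ω⟫ ∂P = 0) {σ : ℝ} (hσ : 0 ≤ σ)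
    (hmom : ∀ t, 1 ≤ t → ∫ ω, ‖e t ω‖ ^ 2 ∂P ≤ σ ^ 2) (t : ℕ) :
    ∫ ω, ‖momentum η 0 (η • fun s => e s ω) t‖ ∂P ≤ σ * √(η t) := by
  have hsq := norm_momentum_sq_le η hη₀ hη (x := fun s => (he s).toLp (e s))
    (fun s u hs hsu => by rw [MemLp.inner_toLp_toLp]; exact horth s u hs hsu)
    (fun s hs => by rw [MemLp.norm_toLp_sq]; exact hmom s hs) t
  calc ∫ ω, ‖momentum η 0 (η • fun s => e s ω) t‖ ∂P
      = ∫ ω, ‖(momentum η 0 (η • fun s => (he s).toLp (e s)) t) ω‖ ∂P :=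
        integral_congr_ae <| by
          filter_upwards [coeFn_momentum η (fun s => (he s).coeFn_toLp) t] with ω hω
          rw [hω]
    _ ≤ ‖momentum η 0 (η • fun s => (he s).toLp (e s)) t‖ := L2.integral_norm_le_norm _
    _ ≤ σ * √(η t) := by
        rw [← Real.sqrt_sq hσ, ← Real.sqrt_mul (sq_nonneg σ)]
        exact Real.le_sqrt_of_sq_le hsq

end L2

end Momentum

section CubeRootSteps

variable {a b : ℝ}

lemma one_sub_sq_mul_sq_le (ha : 0 < a) (hab : a ≤ b) (hb₁ : b ≤ 1)
    (h : b ^ 3 - a ^ 3 = a ^ 3 * b ^ 3 / 2) : (1 - a ^ 2) * b ^ 2 ≤ a ^ 2 := by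
  have hb : 0 < b := ha.trans_le hab
  -- `b · (1 - a²) b² = a³ - a² b³ (1 - a / 2) ≤ a² b`
  refine le_of_mul_le_mul_left ?_ hb
  nlinarith [mul_nonneg (mul_nonneg (sq_nonneg a) (pow_pos hb 3).le) (by linarith : 0 ≤ 1 - a / 2),
    mul_nonneg (sq_nonneg a) (sub_nonneg.2 hab)]

lemma four_mul_one_sub_sq_add_cube_le (ha : 0 < a) (hab : a ≤ b) (hb₁ : b ≤ 1)
    (h : b ^ 3 - a ^ 3 = a ^ 3 * b ^ 3 / 2) : 4 * b * (1 - a ^ 2) + b ^ 3 ≤ 4 * a := by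
  have hb : 0 < b := ha.trans_le hab
  have hcube : b ^ 3 ≤ 3 / 2 * a ^ 3 := by
    nlinarith [mul_le_mul_of_nonneg_left (pow_le_one₀ (n := 3) hb.le hb₁) (pow_pos ha 3).le]
  have hsq : b ^ 2 ≤ 2 * a ^ 2 := by
    by_contra! hlt
    nlinarith [mul_le_mul_of_nonneg_left hab (sq_nonneg a), mul_lt_mul_of_pos_left hlt hb]
  have hdiff : 4 * (b - a) ≤ 2 / 3 * a * b ^ 3 := by
    have : (b - a) * (3 * a ^ 2) ≤ a ^ 3 * b ^ 3 / 2 := by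
      nlinarith [mul_nonneg (sub_nonneg.2 hab) (sub_nonneg.2 hab),
        mul_nonneg (sub_nonneg.2 hab) ha.le, mul_nonneg (sub_nonneg.2 hab) (mul_nonneg ha.le hb.le)]
    refine le_of_mul_le_mul_right ?_ (pow_pos ha 2)
    nlinarith
  have hquad : 2 / 3 * a * b ^ 2 + b ^ 2 ≤ 4 * a ^ 2 := by
    nlinarith [mul_le_mul_of_nonneg_left hsq ha.le]
  nlinarith [mul_le_mul_of_nonneg_left hquad hb.le]

end CubeRootSteps

noncomputable def rootNMPG (t : ℕ) : ℝ := (2 / ((t : ℝ) + 2)) ^ ((1 : ℝ) / 3)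

lemma rootNMPG_pos (t : ℕ) : 0 < rootNMPG t := by unfold rootNMPG; positivity

lemma rootNMPG_le_one (t : ℕ) : rootNMPG t ≤ 1 :=
  Real.rpow_le_one (by positivity) ((div_le_one (by positivity)).2 (by simp)) (by norm_num)

lemma rootNMPG_zero : rootNMPG 0 = 1 := by norm_num [rootNMPG]

lemma rootNMPG_succ_le (t : ℕ) : rootNMPG (t + 1) ≤ rootNMPG t := by
  unfold rootNMPG
  gcongr
  linarith

lemma rootNMPG_pow (t : ℕ) (n : ℕ) : rootNMPG t ^ n = (2 / ((t : ℝ) + 2)) ^ ((n : ℝ) / 3) := by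
  rw [rootNMPG, ← Real.rpow_natCast, ← Real.rpow_mul (by positivity)]
  ring_nf

lemma etaNMPG_eq_rootNMPG_sq (t : ℕ) : etaNMPG t = rootNMPG t ^ 2 := by
  rw [rootNMPG_pow, etaNMPG]; norm_num

lemma gammaNMPG_eq (γ₀ : ℝ) (t : ℕ) : gammaNMPG γ₀ t = γ₀ * rootNMPG t ^ 3 := by
  rw [rootNMPG_pow, gammaNMPG]; norm_num

lemma sqrt_etaNMPG (t : ℕ) : √(etaNMPG t) = rootNMPG t := by
  rw [etaNMPG_eq_rootNMPG_sq, Real.sqrt_sq (rootNMPG_pos t).le]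

lemma rootNMPG_cube_sub_cube (t : ℕ) :
    rootNMPG t ^ 3 - rootNMPG (t + 1) ^ 3 = rootNMPG (t + 1) ^ 3 * rootNMPG t ^ 3 / 2 := by
  rw [rootNMPG_pow, rootNMPG_pow]
  norm_num
  field_simp
  ring

lemma etaNMPG_pos (t : ℕ) : 0 < etaNMPG t := by
  rw [etaNMPG_eq_rootNMPG_sq]; exact pow_pos (rootNMPG_pos t) 2

lemma etaNMPG_le_one (t : ℕ) : etaNMPG t ≤ 1 := by
  rw [etaNMPG_eq_rootNMPG_sq]; exact pow_le_one₀ (rootNMPG_pos t).le (rootNMPG_le_one t)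

lemma one_sub_etaNMPG_sq_mul_add_sq_le (t : ℕ) :
    (1 - etaNMPG (t + 1)) ^ 2 * etaNMPG t + etaNMPG (t + 1) ^ 2 ≤ etaNMPG (t + 1) := by
  have hstep := one_sub_sq_mul_sq_le (rootNMPG_pos (t + 1)) (rootNMPG_succ_le t)
    (rootNMPG_le_one t) (rootNMPG_cube_sub_cube t)
  have hη := etaNMPG_le_one (t + 1)
  rw [etaNMPG_eq_rootNMPG_sq, etaNMPG_eq_rootNMPG_sq] at *
  nlinarith [mul_le_mul_of_nonneg_left hstep (sub_nonneg.2 hη)]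

lemma one_sub_etaNMPG_mul_rootNMPG_le (t : ℕ) :
    (1 - etaNMPG (t + 1)) * rootNMPG t ≤ rootNMPG (t + 1) := by
  have hstep := one_sub_etaNMPG_sq_mul_add_sq_le t
  rw [etaNMPG_eq_rootNMPG_sq, etaNMPG_eq_rootNMPG_sq] at *
  exact le_of_sq_le_sq (by nlinarith) (rootNMPG_pos _).le

lemma one_sub_etaNMPG_mul_add_le {L Δ γ₀ : ℝ} (hLγ : 0 ≤ L * γ₀) (hΔ : 0 ≤ Δ) (t : ℕ) :
    (1 - etaNMPG (t + 1)) * (4 * L * gammaNMPG γ₀ t * (etaNMPG t)⁻¹ + 2 * Δ * (etaNMPG t)⁻¹)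
        + (L * gammaNMPG γ₀ t + Δ)
      ≤ 4 * L * gammaNMPG γ₀ (t + 1) * (etaNMPG (t + 1))⁻¹ + 2 * Δ * (etaNMPG (t + 1))⁻¹ := by
  simp only [etaNMPG_eq_rootNMPG_sq, gammaNMPG_eq]
  have ha := rootNMPG_pos (t + 1)
  have hab := rootNMPG_succ_le t
  have hb := rootNMPG_le_one t
  set a := rootNMPG (t + 1)
  set b := rootNMPG t
  have hb0 : 0 < b := ha.trans_le hab
  have hL := four_mul_one_sub_sq_add_cube_le ha hab hb (rootNMPG_cube_sub_cube t)
  have hΔstep : (1 - a ^ 2) * (2 * (b ^ 2)⁻¹) + 1 ≤ 2 * (a ^ 2)⁻¹ := by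
    have : (b ^ 2)⁻¹ ≤ (a ^ 2)⁻¹ := by gcongr
    have : a ^ 2 * (a ^ 2)⁻¹ = 1 := by field_simp
    nlinarith [pow_le_one₀ (n := 2) ha.le (hab.trans hb)]
  calc (1 - a ^ 2) * (4 * L * (γ₀ * b ^ 3) * (b ^ 2)⁻¹ + 2 * Δ * (b ^ 2)⁻¹) + (L * (γ₀ * b ^ 3) + Δ)
      = L * γ₀ * (4 * b * (1 - a ^ 2) + b ^ 3) + Δ * ((1 - a ^ 2) * (2 * (b ^ 2)⁻¹) + 1) := by
        field_simp; ring
    _ ≤ L * γ₀ * (4 * a) + Δ * (2 * (a ^ 2)⁻¹) := by gcongr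
    _ = 4 * L * (γ₀ * a ^ 3) * (a ^ 2)⁻¹ + 2 * Δ * (a ^ 2)⁻¹ := by field_simp

section NMPG

variable {F : Type*} [NormedAddCommGroup F] [NormedSpace ℝ F]

lemma norm_momentum_etaNMPG_le (x₀ : F) (t : ℕ) :
    ‖momentum etaNMPG x₀ 0 t‖ ≤ rootNMPG t * ‖x₀‖ := by
  refine norm_momentum_le etaNMPG (fun t => etaNMPG_le_one _) (b := fun t => rootNMPG t * ‖x₀‖)
    (c := 0) (by rw [rootNMPG_zero, one_mul]) (fun _ => by simp) (fun s => ?_) t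
  simpa [mul_assoc] using
    mul_le_mul_of_nonneg_right (one_sub_etaNMPG_mul_rootNMPG_le s) (norm_nonneg x₀)

lemma norm_momentum_drift_le {L Δ γ₀ : ℝ} (hL : 0 ≤ L) (hΔ : 0 ≤ Δ) (hγ₀ : 0 ≤ γ₀) {S : ℕ → F}
    (hS : ∀ t, ‖S (t + 1)‖ ≤ L * gammaNMPG γ₀ t + Δ) (t : ℕ) :
    ‖momentum etaNMPG 0 (fun s => (1 - etaNMPG s) • S s) t‖
      ≤ 4 * L * gammaNMPG γ₀ t * (etaNMPG t)⁻¹ + 2 * Δ * (etaNMPG t)⁻¹ := by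
  refine norm_momentum_le etaNMPG (fun t => etaNMPG_le_one _) ?_ (fun s => ?_)
    (one_sub_etaNMPG_mul_add_le (mul_nonneg hL hγ₀) hΔ) t
  · have := etaNMPG_pos 0
    simp only [norm_zero, gammaNMPG]
    positivity
  · have hη := etaNMPG_pos (s + 1)
    rw [norm_smul, Real.norm_of_nonneg (sub_nonneg.2 (etaNMPG_le_one _))]
    exact (mul_le_of_le_one_left (norm_nonneg _) (by linarith)).trans (hS s)

end NMPG

theorem stmt_13 :
    ∃ C₁ > (0 : ℝ), ∃ C₂ > (0 : ℝ), ∃ C₃ > (0 : ℝ),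
      ∀ (d : ℕ), 1 ≤ d →
      ∀ (σ L Δ γ₀ : ℝ), 0 ≤ σ → 0 ≤ L → 0 ≤ Δ → 0 < γ₀ →
      ∀ (Ω : Type) [MeasurableSpace Ω] (P : Measure Ω) [IsProbabilityMeasure P]
        (ehat e S : ℕ → Ω → EuclideanSpace ℝ (Fin d)),
        (∀ t, MemLp (ehat t) 2 P) →
        (∀ t, MemLp (e t) 2 P) →
        (∀ t, MemLp (S t) 2 P) →
        (∀ t : ℕ, 1 ≤ t → ∀ ω, ehat t ω =
          (1 - etaNMPG t) • ehat (t - 1) ω + etaNMPG t • e t ω + (1 - etaNMPG t) • S t ω) →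
        (∀ s t : ℕ, 1 ≤ s → s < t → ∫ ω, ⟪e s ω, e t ω⟫ ∂P = 0) →
        (∀ t : ℕ, 1 ≤ t → ∫ ω, ‖e t ω‖ ^ 2 ∂P ≤ σ ^ 2) →
        (∫ ω, ‖ehat 0 ω‖ ∂P ≤ σ) →
        (∀ t : ℕ, 1 ≤ t → ∀ᵐ ω ∂P, ‖S t ω‖ ≤ L * gammaNMPG γ₀ (t - 1) + Δ) →
        ∀ T : ℕ, 1 ≤ T →
          ∫ ω, ‖ehat T ω‖ ∂P ≤
            C₁ * σ * (etaNMPG T) ^ ((1 : ℝ) / 2)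
              + C₂ * L * gammaNMPG γ₀ T * (etaNMPG T)⁻¹
              + C₃ * Δ * (etaNMPG T)⁻¹ := by
  refine ⟨2, two_pos, 4, four_pos, 2, two_pos, ?_⟩
  intro d _ σ L Δ γ₀ hσ hL hΔ hγ₀ Ω _ P _ ehat e S hehat he _ hrec horth hmom h0 hS T _
  set B := 4 * L * gammaNMPG γ₀ T * (etaNMPG T)⁻¹ + 2 * Δ * (etaNMPG T)⁻¹
  set Z := fun ω => momentum etaNMPG 0 (etaNMPG • fun s => e s ω) T
  have hsplit (ω : Ω) : ehat T ω = momentum etaNMPG (ehat 0 ω) 0 T + Z ω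
      + momentum etaNMPG 0 (fun s => (1 - etaNMPG s) • S s ω) T := by
    rw [← momentum_add, ← momentum_add]
    simpa using eq_momentum etaNMPG (x := fun t => ehat t ω)
      (fun t => by simpa [add_assoc] using hrec (t + 1) (by omega) ω) T
  have hpointwise : ∀ᵐ ω ∂P, ‖ehat T ω‖ ≤ rootNMPG T * ‖ehat 0 ω‖ + ‖Z ω‖ + B := by
    filter_upwards [ae_all_iff.2 fun t => hS (t + 1) (by omega)] with ω hω
    rw [hsplit]
    exact norm_add₃_le.trans (add_le_add_three (norm_momentum_etaNMPG_le _ T) le_rfl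
      (norm_momentum_drift_le hL hΔ hγ₀.le (fun t => by simpa using hω t) T))
  have hZ : Integrable (fun ω => ‖Z ω‖) P :=
    ((memLp_momentum etaNMPG (memLp_const 0) (fun s => (he s).const_smul (etaNMPG s)) T).integrable
      one_le_two).norm
  have h₀ : Integrable (fun ω => ‖ehat 0 ω‖) P := ((hehat 0).integrable one_le_two).norm
  have h₀Z : Integrable (fun ω => rootNMPG T * ‖ehat 0 ω‖ + ‖Z ω‖) P := (h₀.const_mul _).add hZ
  rw [add_assoc]
  calc ∫ ω, ‖ehat T ω‖ ∂P
      ≤ ∫ ω, rootNMPG T * ‖ehat 0 ω‖ + ‖Z ω‖ + B ∂P :=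
        integral_mono_ae ((hehat T).integrable one_le_two).norm
          (h₀Z.add (integrable_const B)) hpointwise
    _ = rootNMPG T * ∫ ω, ‖ehat 0 ω‖ ∂P + ∫ ω, ‖Z ω‖ ∂P + B := by
        rw [integral_add h₀Z (integrable_const B),
          integral_add (h₀.const_mul _) hZ, integral_const_mul, integral_const, probReal_univ,
          one_smul]
    _ ≤ rootNMPG T * σ + σ * √(etaNMPG T) + B := by
        gcongr
        · exact (rootNMPG_pos T).le
        · exact integral_norm_momentum_le etaNMPG he (etaNMPG_pos 0).le
            one_sub_etaNMPG_sq_mul_add_sq_le horth hσ hmom T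
    _ = 2 * σ * etaNMPG T ^ ((1 : ℝ) / 2) + B := by
        rw [← Real.sqrt_eq_rpow, sqrt_etaNMPG]; ring
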